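/- Let G be a gyrogroup with a gyronorm and gyronorm metric d(x,y) = ‖⊖x ⊕ y‖, and suppose G is nondegenerate, i.e., some gyroautomorphism gyr[a,b] is not the identity map. Then G is isotropic: for every point p ∈ G there exists a surjective isometry T of (G, d) with T(p) = p and T not equal to the identity map. -/

import Mathlib

/-- A gyrogroup: a set with a binary operation `add`, identity `e`, inversion `neg`,
and gyroautomorphisms `gyr` satisfying the gyrogroup axioms. -/
structure Gyrogroup (G : Type*) where
  add : G → G → G
  e : G
  neg : G → G
  gyr : G → G → G → G
  e_add : ∀ a, add e a = a
  add_e : ∀ a, add a e = a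
  neg_add : ∀ a, add (neg a) a = e
  add_neg : ∀ a, add a (neg a) = e
  gyr_bijective : ∀ a b, Function.Bijective (gyr a b)
  gyr_add : ∀ a b x y, gyr a b (add x y) = add (gyr a b x) (gyr a b y)
  left_gyroassoc : ∀ a b c, add a (add b c) = add (add a b) (gyr a b c)
  left_loop : ∀ a b, gyr (add a b) b = gyr a b

/-- A gyronorm on a gyrogroup. -/
structure Gyronorm {G : Type*} (gg : Gyrogroup G) where
  toFun : G → ℝ
  nonneg : ∀ x, 0 ≤ toFun x
  eq_zero_iff : ∀ x, toFun x = 0 ↔ x = gg.e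
  neg_eq : ∀ x, toFun (gg.neg x) = toFun x
  subadd : ∀ x y, toFun (gg.add x y) ≤ toFun x + toFun y
  gyr_eq : ∀ a b x, toFun (gg.gyr a b x) = toFun x

/-!
Left gyrotranslations and gyroautomorphisms are isometries of the gyronorm metric: the
gyrotranslation identity `⊖(u ⊕ x) ⊕ (u ⊕ y) = gyr[u,x](⊖x ⊕ y)` together with gyration
invariance of the norm gives the first, and `gyr[a,b](⊖x) = ⊖gyr[a,b]x` gives the second.
Conjugating a nonidentity `gyr[a,b]`, which fixes `e`, by the left translation `x ↦ p ⊕ x`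
therefore yields a nonidentity surjective isometry fixing `p`.
-/

namespace Gyrogroup

variable {G : Type*} (gg : Gyrogroup G)

theorem add_left_cancel {u x y : G} (h : gg.add u x = gg.add u y) : x = y := by
  have h' := congrArg (gg.add (gg.neg u)) h
  rw [gg.left_gyroassoc, gg.left_gyroassoc, gg.neg_add, gg.e_add, gg.e_add] at h'
  exact (gg.gyr_bijective _ _).1 h'

theorem gyr_e_left (u x : G) : gg.gyr gg.e u x = x := by
  have h := gg.left_gyroassoc gg.e u x
  rw [gg.e_add, gg.e_add] at h
  exact (gg.add_left_cancel h).symm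

theorem neg_add_cancel_left (u x : G) : gg.add (gg.neg u) (gg.add u x) = x := by
  have hloop := gg.left_loop (gg.neg u) u
  rw [gg.neg_add] at hloop
  rw [gg.left_gyroassoc, gg.neg_add, gg.e_add, ← hloop, gyr_e_left]

theorem neg_neg (x : G) : gg.neg (gg.neg x) = x :=
  (gg.add_left_cancel (by rw [gg.add_neg, gg.neg_add])).symm

theorem add_neg_cancel_left (u x : G) : gg.add u (gg.add (gg.neg u) x) = x := by
  simpa only [neg_neg] using gg.neg_add_cancel_left (gg.neg u) x

theorem add_left_surjective (u : G) : Function.Surjective (gg.add u) :=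
  fun x => ⟨gg.add (gg.neg u) x, gg.add_neg_cancel_left u x⟩

theorem gyr_apply_e (a b : G) : gg.gyr a b gg.e = gg.e := by
  refine (gg.add_left_cancel (u := gg.gyr a b gg.e) ?_).symm
  rw [← gg.gyr_add, gg.e_add, gg.add_e]

theorem gyr_neg (a b x : G) : gg.gyr a b (gg.neg x) = gg.neg (gg.gyr a b x) := by
  refine gg.add_left_cancel (u := gg.gyr a b x) ?_
  rw [← gg.gyr_add, gg.add_neg, gg.add_neg, gyr_apply_e]

theorem neg_add_add_left_eq_gyr (u x y : G) :
    gg.add (gg.neg (gg.add u x)) (gg.add u y) = gg.gyr u x (gg.add (gg.neg x) y) := by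
  have hy : gg.add u y = gg.add (gg.add u x) (gg.gyr u x (gg.add (gg.neg x) y)) := by
    rw [← gg.left_gyroassoc, add_neg_cancel_left]
  rw [hy, neg_add_cancel_left]

def gyrAbout (p a b : G) : G → G :=
  gg.add p ∘ gg.gyr a b ∘ gg.add (gg.neg p)

theorem gyrAbout_surjective (p a b : G) : Function.Surjective (gg.gyrAbout p a b) :=
  (gg.add_left_surjective p).comp
    ((gg.gyr_bijective a b).2.comp (gg.add_left_surjective (gg.neg p)))

theorem gyrAbout_self (p a b : G) : gg.gyrAbout p a b p = p := by
  simp only [gyrAbout, Function.comp_apply, gg.neg_add, gyr_apply_e, gg.add_e]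

theorem gyrAbout_ne_id {a b : G} (hab : gg.gyr a b ≠ id) (p : G) : gg.gyrAbout p a b ≠ id := by
  intro h
  refine hab (funext fun c => gg.add_left_cancel (u := p) ?_)
  simpa only [gyrAbout, Function.comp_apply, neg_add_cancel_left, id] using
    congrFun h (gg.add p c)

end Gyrogroup

namespace Gyronorm

variable {G : Type*} {gg : Gyrogroup G} (nm : Gyronorm gg)

def dist (x y : G) : ℝ :=
  nm.toFun (gg.add (gg.neg x) y)

theorem dist_add_left (u x y : G) : nm.dist (gg.add u x) (gg.add u y) = nm.dist x y := by
  rw [dist, gg.neg_add_add_left_eq_gyr, nm.gyr_eq, dist]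

theorem dist_gyr (a b x y : G) : nm.dist (gg.gyr a b x) (gg.gyr a b y) = nm.dist x y := by
  rw [dist, ← gg.gyr_neg, ← gg.gyr_add, nm.gyr_eq, dist]

theorem dist_gyrAbout (p a b x y : G) :
    nm.dist (gg.gyrAbout p a b x) (gg.gyrAbout p a b y) = nm.dist x y := by
  simp only [Gyrogroup.gyrAbout, Function.comp_apply, dist_add_left, dist_gyr]

end Gyronorm

/-- A nondegenerate normed gyrogroup (one having a nonidentity gyroautomorphism)
is isotropic: every point is fixed by some nonidentity surjective isometry. -/
theorem normed_gyrogroup_isotropic {G : Type*} (gg : Gyrogroup G) (nm : Gyronorm gg)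
    (d : G → G → ℝ) (hd : ∀ x y, d x y = nm.toFun (gg.add (gg.neg x) y))
    (hnd : ∃ a b, gg.gyr a b ≠ id) :
    ∀ p : G, ∃ T : G → G, Function.Surjective T ∧
      (∀ x y, d (T x) (T y) = d x y) ∧ T p = p ∧ T ≠ id := by
  obtain ⟨a, b, hab⟩ := hnd
  obtain rfl : d = nm.dist := funext fun x => funext (hd x)
  intro p
  exact ⟨gg.gyrAbout p a b, gg.gyrAbout_surjective p a b, nm.dist_gyrAbout p a b,
    gg.gyrAbout_self p a b, gg.gyrAbout_ne_id hab p⟩
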